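/- Let t ∈ (0,1) and let Q_0,…,Q_n be the points computed by the new algorithm for the rational Bézier curve R_n at parameter t. For u ∈ (0,1), the point R_n(u) lies in the convex hull of {Q_0,…,Q_n} if u ≤ t. -/

import Mathlib

/-!
Write `a k = ω k B^n_k(t)` and `S k = a 0 + ⋯ + a k`. Induction on the recurrence gives
`h k = a k / S k`, so `Q k` is the barycentre of `W 0, …, W k` with weights `a`. The point
`R_n(u)` is the barycentre of the `W k` with weights `r k a k`, where `r k = B^n_k(u) / B^n_k(t)`
decreases in `k` as soon as `u ≤ t` (the odds `x / (1 - x)` increase). Abel summation then writes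
`∑ r k a k W k = ∑ (r k - r (k + 1)) S k Q k` with `r (n + 1) = 0`, a combination of the `Q k`
with nonnegative coefficients.
-/

open Finset

def bern (n k : ℕ) (t : ℝ) : ℝ := (n.choose k : ℝ) * t ^ k * (1 - t) ^ (n - k)

section CenterMass

variable {E : Type*} [AddCommGroup E] [Module ℝ E]

theorem Finset.sum_range_sub_smul_partialSum (r : ℕ → ℝ) (g : ℕ → E) (N : ℕ) :
    ∑ k ∈ range N, (r k - r (k + 1)) • ∑ j ∈ range (k + 1), g j =
      ∑ k ∈ range N, r k • g k - r N • ∑ j ∈ range N, g j := by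
  induction N with
  | zero => simp
  | succ N ih =>
    rw [sum_range_succ, ih, sum_range_succ (fun k => r k • g k), sum_range_succ g, sub_smul,
      smul_add]
    abel

theorem Finset.centerMass_range_succ {a : ℕ → ℝ} {W : ℕ → E} {k : ℕ}
    (hS : ∑ j ∈ range (k + 1), a j ≠ 0) (hS' : ∑ j ∈ range (k + 2), a j ≠ 0) :
    (range (k + 2)).centerMass a W =
      (1 - a (k + 1) / ∑ j ∈ range (k + 2), a j) • (range (k + 1)).centerMass a W +
        (a (k + 1) / ∑ j ∈ range (k + 2), a j) • W (k + 1) := by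
  rw [sum_range_succ a (k + 1)] at hS' ⊢
  rw [range_add_one (n := k + 1), centerMass_insert (ha := by simp) (hw := hS), add_comm (a _),
    add_comm ((_ : ℝ) • W (k + 1))]
  congr 2
  field_simp
  ring

theorem Finset.centerMass_mem_convexHull_partialCenterMass {n : ℕ} {a c : ℕ → ℝ}
    (W : ℕ → E) (ha : ∀ k ≤ n, 0 < a k) (hca : AntitoneOn (fun k => c k / a k) (Set.Iic n))
    (hcn : 0 < c n) :
    (range (n + 1)).centerMass c W ∈
      convexHull ℝ ((fun k => (range (k + 1)).centerMass a W) '' Set.Iic n) := by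
  have hc : ∀ k ≤ n, 0 < c k := fun k hk =>
    (div_pos_iff_of_pos_right (ha k hk)).1 <|
      (div_pos hcn (ha n le_rfl)).trans_le (hca (Set.mem_Iic.2 hk) Set.self_mem_Iic hk)
  set r : ℕ → ℝ := fun k => if k ≤ n then c k / a k else 0
  set S : ℕ → ℝ := fun k => ∑ j ∈ range (k + 1), a j
  have hS : ∀ k ≤ n, 0 < S k := fun k hk =>
    sum_pos (fun j hj => ha j ((mem_range_succ_iff.1 hj).trans hk)) nonempty_range_add_one
  have hrc : ∀ k ∈ range (n + 1), r k * a k = c k := by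
    intro k hk
    have hk := mem_range_succ_iff.1 hk
    simp only [r, if_pos hk]
    exact div_mul_cancel₀ _ (ha k hk).ne'
  have hrn : r (n + 1) = 0 := by simp [r]
  -- the weights of Abel summation; `r (n + 1) = 0` makes the last one `r n * S n`
  set w : ℕ → ℝ := fun k => (r k - r (k + 1)) * S k
  have hw : ∀ k ∈ range (n + 1), 0 ≤ w k := by
    intro k hk
    have hk := mem_range_succ_iff.1 hk
    refine mul_nonneg (sub_nonneg.2 ?_) (hS k hk).le
    rcases hk.lt_or_eq with hk | rfl
    · simp only [r, if_pos hk.le, if_pos (Nat.succ_le_of_lt hk)]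
      exact hca (Set.mem_Iic.2 hk.le) (Set.mem_Iic.2 hk) k.le_succ
    · simpa [r, hrn] using (div_pos hcn (ha k le_rfl)).le
  have hsum : ∑ k ∈ range (n + 1), w k = ∑ k ∈ range (n + 1), c k := by
    have := sum_range_sub_smul_partialSum r a (n + 1)
    simp only [hrn, smul_eq_mul, zero_mul, sub_zero] at this
    rw [← sum_congr rfl hrc, ← this]
  have hsum_smul : ∑ k ∈ range (n + 1), w k • (range (k + 1)).centerMass a W =
      ∑ k ∈ range (n + 1), c k • W k := by
    have := sum_range_sub_smul_partialSum r (fun j => a j • W j) (n + 1)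
    simp only [hrn, zero_smul, sub_zero, smul_smul] at this
    calc ∑ k ∈ range (n + 1), w k • (range (k + 1)).centerMass a W
        = ∑ k ∈ range (n + 1), (r k - r (k + 1)) • ∑ j ∈ range (k + 1), a j • W j :=
          sum_congr rfl fun k hk => by
            rw [centerMass, mul_smul, smul_inv_smul₀ (hS k (mem_range_succ_iff.1 hk)).ne']
      _ = ∑ k ∈ range (n + 1), c k • W k := by
          rw [this]
          exact sum_congr rfl fun k hk => by rw [hrc k hk]
  have hmem := centerMass_mem_convexHull (range (n + 1)) hw
    (hsum ▸ sum_pos (fun k hk => hc k (mem_range_succ_iff.1 hk)) nonempty_range_add_one)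
    (z := fun k => (range (k + 1)).centerMass a W)
    (fun k hk => Set.mem_image_of_mem _ (Set.mem_Iic.2 (mem_range_succ_iff.1 hk)))
  rwa [centerMass, hsum, hsum_smul] at hmem

theorem Finset.eq_centerMass_range_of_recurrence {n : ℕ} {a h : ℕ → ℝ} {Q W : ℕ → E}
    (ha : ∀ k ≤ n, 0 < a k)
    (hh : ∀ k < n, h (k + 1) = a (k + 1) / ∑ j ∈ range (k + 2), a j) (hQ0 : Q 0 = W 0)
    (hQ : ∀ k < n, Q (k + 1) = (1 - h (k + 1)) • Q k + h (k + 1) • W (k + 1)) :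
    ∀ k ≤ n, Q k = (range (k + 1)).centerMass a W := by
  have hS : ∀ k ≤ n, 0 < ∑ j ∈ range (k + 1), a j := fun k hk =>
    sum_pos (fun j hj => ha j ((mem_range_succ_iff.1 hj).trans hk)) nonempty_range_add_one
  intro k hk
  induction k with
  | zero => rw [hQ0, range_one, centerMass_singleton _ _ (ha 0 hk).ne']
  | succ k ih =>
    rw [hQ k hk, hh k hk, ih (by omega),
      centerMass_range_succ (hS k (by omega)).ne' (hS (k + 1) hk).ne']

end CenterMass

theorem bern_pos {n k : ℕ} {t : ℝ} (hk : k ≤ n) (ht : t ∈ Set.Ioo (0 : ℝ) 1) :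
    0 < bern n k t := by
  have := sub_pos.2 ht.2
  have := ht.1
  have := Nat.choose_pos hk
  unfold bern
  positivity

theorem mul_bern_succ {n k : ℕ} (hk : k < n) (t : ℝ) :
    ((k + 1 : ℕ) : ℝ) * (1 - t) * bern n (k + 1) t =
      ((n - k : ℕ) : ℝ) * t * bern n k t := by
  have hchoose : (n.choose (k + 1) : ℝ) * ((k + 1 : ℕ) : ℝ) =
      n.choose k * ((n - k : ℕ) : ℝ) := by
    exact_mod_cast Nat.choose_succ_right_eq n k
  have hpow : (1 - t) ^ (n - k) = (1 - t) ^ (n - (k + 1)) * (1 - t) := by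
    rw [← pow_succ]
    congr 1
    omega
  unfold bern
  rw [hpow]
  linear_combination t ^ k * t * (1 - t) ^ (n - (k + 1)) * (1 - t) * hchoose

theorem bern_div_bern_antitoneOn {n : ℕ} {t u : ℝ} (ht : t ∈ Set.Ioo (0 : ℝ) 1)
    (hu : u ∈ Set.Ioo (0 : ℝ) 1) (hut : u ≤ t) :
    AntitoneOn (fun k => bern n k u / bern n k t) (Set.Iic n) := by
  refine antitoneOn_of_add_one_le Set.ordConnected_Iic fun k _ _ hk => ?_
  have hk : k < n := hk
  have hBu := bern_pos hk.le hu
  have hBt := bern_pos hk.le ht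
  have hBt' : 0 < bern n (k + 1) t := bern_pos hk ht
  have hm : 0 < ((k + 1 : ℕ) : ℝ) * (1 - u) * (1 - t) := by
    have := sub_pos.2 hu.2
    have := sub_pos.2 ht.2
    positivity
  rw [div_le_div_iff₀ hBt' hBt]
  refine le_of_mul_le_mul_left ?_ hm
  calc ((k + 1 : ℕ) : ℝ) * (1 - u) * (1 - t) * (bern n (k + 1) u * bern n k t)
      = ((n - k : ℕ) : ℝ) * bern n k u * bern n k t * (u * (1 - t)) := by
        linear_combination (1 - t) * bern n k t * mul_bern_succ hk u
    _ ≤ ((n - k : ℕ) : ℝ) * bern n k u * bern n k t * (t * (1 - u)) :=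
        mul_le_mul_of_nonneg_left (by nlinarith) (by positivity)
    _ = ((k + 1 : ℕ) : ℝ) * (1 - u) * (1 - t) * (bern n k u * bern n (k + 1) t) := by
        linear_combination -(1 - u) * bern n k u * mul_bern_succ hk t

theorem eq_div_sum_bern_of_recurrence {n : ℕ} {t : ℝ} (ht : t ∈ Set.Ioo (0 : ℝ) 1)
    {ω h : ℕ → ℝ} (hω : ∀ k ≤ n, 0 < ω k) (hh0 : h 0 = 1)
    (hh : ∀ k, 1 ≤ k → k ≤ n →
      h k = ω k * h (k - 1) * t * ((n - k + 1 : ℕ) : ℝ) /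
        (ω (k - 1) * (k : ℝ) * (1 - t) +
          ω k * h (k - 1) * t * ((n - k + 1 : ℕ) : ℝ))) :
    ∀ k ≤ n, h k = ω k * bern n k t / ∑ j ∈ range (k + 1), ω j * bern n j t := by
  intro k hk
  induction k with
  | zero => simp [hh0, (mul_pos (hω 0 hk) (bern_pos hk ht)).ne']
  | succ k ih =>
    have hk' : k < n := hk
    set S := ∑ j ∈ range (k + 1), ω j * bern n j t
    have hS : 0 < S := sum_pos (fun j hj => mul_pos (hω j (by grind)) (bern_pos (by grind) ht))
      nonempty_range_add_one
    have hc : 0 < ω k * ((k + 1 : ℕ) : ℝ) * (1 - t) := by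
      have := hω k hk'.le
      have := sub_pos.2 ht.2
      positivity
    have hstep := hh (k + 1) k.succ_pos hk
    rw [Nat.add_sub_cancel, show n - (k + 1) + 1 = n - k by omega, ih hk'.le] at hstep
    -- `mul_bern_succ` turns the numerator into a multiple of `ω (k + 1) B^n_{k+1}(t)`
    have hnum : ω (k + 1) * (ω k * bern n k t / S) * t * ((n - k : ℕ) : ℝ) =
        ω k * ((k + 1 : ℕ) : ℝ) * (1 - t) * (ω (k + 1) * bern n (k + 1) t / S) := by
      field_simp
      linear_combination -ω (k + 1) * ω k * mul_bern_succ hk' t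
    rw [hstep, hnum, ← mul_one_add, mul_div_mul_left _ _ hc.ne', one_add_div hS.ne',
      div_div_div_cancel_right₀ hS.ne', sum_range_succ]

theorem stmt15 (n d : ℕ) (t u : ℝ) (ht : t ∈ Set.Ioo (0 : ℝ) 1)
    (hu : u ∈ Set.Ioo (0 : ℝ) 1) (hut : u ≤ t)
    (ω : ℕ → ℝ) (W : ℕ → Fin d → ℝ) (hω : ∀ k ≤ n, 0 < ω k)
    (h : ℕ → ℝ) (Q : ℕ → Fin d → ℝ)
    (hh0 : h 0 = 1) (hQ0 : Q 0 = W 0)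
    (hh : ∀ k, 1 ≤ k → k ≤ n →
      h k = ω k * h (k - 1) * t * ((n - k + 1 : ℕ) : ℝ) /
        (ω (k - 1) * (k : ℝ) * (1 - t) +
          ω k * h (k - 1) * t * ((n - k + 1 : ℕ) : ℝ)))
    (hQ : ∀ k, 1 ≤ k → k ≤ n → Q k = (1 - h k) • Q (k - 1) + h k • W k) :
    (∑ k ∈ range (n + 1), ω k * bern n k u)⁻¹ •
        ∑ k ∈ range (n + 1), (ω k * bern n k u) • W k ∈
      convexHull ℝ (Q '' Set.Iic n) := by
  set a : ℕ → ℝ := fun k => ω k * bern n k t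
  have ha : ∀ k ≤ n, 0 < a k := fun k hk => mul_pos (hω k hk) (bern_pos hk ht)
  have hh_eq := eq_div_sum_bern_of_recurrence ht hω hh0 hh
  have hQ' : ∀ k ≤ n, Q k = (range (k + 1)).centerMass a W :=
    eq_centerMass_range_of_recurrence ha (fun k hk => hh_eq (k + 1) hk) hQ0
      (fun k hk => hQ (k + 1) k.succ_pos hk)
  have hca : AntitoneOn (fun k => ω k * bern n k u / a k) (Set.Iic n) :=
    (bern_div_bern_antitoneOn ht hu hut).congr fun k hk =>
      (mul_div_mul_left _ _ (hω k hk).ne').symm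
  rw [Set.image_congr fun k (hk : k ∈ Set.Iic n) => hQ' k hk]
  exact centerMass_mem_convexHull_partialCenterMass W ha hca
    (mul_pos (hω n le_rfl) (bern_pos le_rfl hu))
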